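/- Let x, q ∈ ℝ^d with ‖q‖ = 1, M > 0, 0 < U < 1 with ‖Ux/M‖ ≤ 1, and m ∈ ℕ with m ≥ 1. Define P(x) = (Ux/M, 1/2 - ‖Ux/M‖², 1/2 - ‖Ux/M‖⁴, …, 1/2 - ‖Ux/M‖^{2^m}) and Q(q) = (q, 0, …, 0), both in ℝ^{d+m}. Then ⟨Q(q), P(x)⟩ / (‖Q(q)‖·‖P(x)‖) = (U/M)·⟨q, x⟩ / √(m/4 + ‖Ux/M‖^{2^{m+1}}). -/

import Mathlib

open Real RealInnerProductSpace

noncomputable def signAlshP {d : ℕ} (m : ℕ) (U M : ℝ) (x : EuclideanSpace ℝ (Fin d)) :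
    EuclideanSpace ℝ (Fin (d + m)) :=
  (EuclideanSpace.equiv (Fin (d + m)) ℝ).symm
    (Fin.append (EuclideanSpace.equiv (Fin d) ℝ ((U / M) • x))
      (fun j : Fin m => (1 / 2 : ℝ) - ‖(U / M) • x‖ ^ (2 ^ (j.val + 1))))

noncomputable def signAlshQ {d : ℕ} (m : ℕ) (q : EuclideanSpace ℝ (Fin d)) :
    EuclideanSpace ℝ (Fin (d + m)) :=
  (EuclideanSpace.equiv (Fin (d + m)) ℝ).symm
    (Fin.append (EuclideanSpace.equiv (Fin d) ℝ q) (fun _ : Fin m => (0 : ℝ)))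

theorem inner_equiv_symm_append {𝕜 : Type*} [RCLike 𝕜] {a b : ℕ} (u u' : Fin a → 𝕜)
    (v v' : Fin b → 𝕜) :
    inner 𝕜 ((EuclideanSpace.equiv (Fin (a + b)) 𝕜).symm (Fin.append u v))
        ((EuclideanSpace.equiv (Fin (a + b)) 𝕜).symm (Fin.append u' v')) =
      inner 𝕜 ((EuclideanSpace.equiv (Fin a) 𝕜).symm u)
          ((EuclideanSpace.equiv (Fin a) 𝕜).symm u') +
        inner 𝕜 ((EuclideanSpace.equiv (Fin b) 𝕜).symm v)
          ((EuclideanSpace.equiv (Fin b) 𝕜).symm v') := by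
  simp [PiLp.inner_apply, Fin.sum_univ_add]

/- With `s = t ^ 2 ^ (j + 1)` each term is `1 / 4 + (s ^ 2 - s)`, and `s ^ 2` is the next `s`,
so the sum telescopes. -/
theorem sum_sq_half_sub_pow_two_pow (t : ℝ) (m : ℕ) :
    ∑ j : Fin m, ((1 / 2 : ℝ) - t ^ 2 ^ (j.val + 1)) ^ 2 = m / 4 + t ^ 2 ^ (m + 1) - t ^ 2 := by
  have hsq (j : ℕ) : ((1 / 2 : ℝ) - t ^ 2 ^ (j + 1)) ^ 2 =
      1 / 4 + (t ^ 2 ^ (j + 1 + 1) - t ^ 2 ^ (j + 1)) := by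
    rw [pow_succ 2 (j + 1), pow_mul]; ring
  rw [Fin.sum_univ_eq_sum_range (fun j => ((1 / 2 : ℝ) - t ^ 2 ^ (j + 1)) ^ 2)]
  simp only [hsq, Finset.sum_add_distrib, Finset.sum_range_sub (fun j => t ^ 2 ^ (j + 1)),
    Finset.sum_const, Finset.card_range, nsmul_eq_mul, zero_add, pow_one]
  ring

theorem inner_signAlshQ_signAlshP {d : ℕ} (m : ℕ) (U M : ℝ)
    (q x : EuclideanSpace ℝ (Fin d)) :
    ⟪signAlshQ m q, signAlshP m U M x⟫ = U / M * ⟪q, x⟫ := by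
  rw [signAlshQ, signAlshP, inner_equiv_symm_append]
  simp [← Pi.zero_def, real_inner_smul_right]

theorem norm_signAlshQ {d : ℕ} (m : ℕ) (q : EuclideanSpace ℝ (Fin d)) :
    ‖signAlshQ m q‖ = ‖q‖ := by
  rw [norm_eq_sqrt_real_inner, norm_eq_sqrt_real_inner q, signAlshQ, inner_equiv_symm_append]
  simp [← Pi.zero_def]

theorem norm_sq_signAlshP {d : ℕ} (m : ℕ) (U M : ℝ) (x : EuclideanSpace ℝ (Fin d)) :
    ‖signAlshP m U M x‖ ^ 2 = m / 4 + ‖(U / M) • x‖ ^ 2 ^ (m + 1) := by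
  rw [← real_inner_self_eq_norm_sq, signAlshP, inner_equiv_symm_append,
    ContinuousLinearEquiv.symm_apply_apply, real_inner_self_eq_norm_sq,
    real_inner_self_eq_norm_sq,
    EuclideanSpace.real_norm_sq_eq ((EuclideanSpace.equiv _ ℝ).symm _)]
  simp only [PiLp.coe_symm_continuousLinearEquiv, WithLp.ofLp_toLp]
  rw [sum_sq_half_sub_pow_two_pow]
  ring

theorem signalsh_identity_general (d m : ℕ) (U M : ℝ) (q x : EuclideanSpace ℝ (Fin d))
    (hq : ‖q‖ = 1) :
    ⟪signAlshQ m q, signAlshP m U M x⟫ / (‖signAlshQ m q‖ * ‖signAlshP m U M x‖) =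
      (U / M) * ⟪q, x⟫ / Real.sqrt ((m : ℝ) / 4 + ‖(U / M) • x‖ ^ (2 ^ (m + 1))) := by
  rw [inner_signAlshQ_signAlshP, norm_signAlshQ, hq, one_mul, ← norm_sq_signAlshP,
    Real.sqrt_sq (norm_nonneg _)]

theorem signalsh_identity (d m : ℕ) (U M : ℝ) (q x : EuclideanSpace ℝ (Fin d))
    (hq : ‖q‖ = 1) (hM : 0 < M) (hU0 : 0 < U) (hU1 : U < 1) (hm : 1 ≤ m)
    (hxn : ‖(U / M) • x‖ ≤ 1) :
    ⟪signAlshQ m q, signAlshP m U M x⟫ / (‖signAlshQ m q‖ * ‖signAlshP m U M x‖) =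
      (U / M) * ⟪q, x⟫ / Real.sqrt ((m : ℝ) / 4 + ‖(U / M) • x‖ ^ (2 ^ (m + 1))) :=
  signalsh_identity_general d m U M q x hq
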